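/- arXiv:1101.1336 — 5 statements merged into one kernel-verified Lean document; each statement's English description precedes it below -/
import Mathlib

section
/- The Jucys–Murphy elements x_1,...,x_n of the Brauer algebra B_n(ω), defined by x_r = (ω-1)/2 + Σ_{i=1}^{r-1} (s_{ir} - ε_{ir}), pairwise commute. -/
open scoped BigOperators

/-- The defining relations of the Brauer algebra `B_n(ω)`, expressed in terms of the
transposition elements `s i j` and contraction elements `ε i j` associated with pairs of
(distinct) indices. -/
structure BrauerRels (K : Type*) [Field K] (A : Type*) [Ring A] [Algebra K A]
    (ω : K) (s ε : ℕ → ℕ → A) : Prop where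
  s_symm : ∀ i j, s i j = s j i
  e_symm : ∀ i j, ε i j = ε j i
  s_sq : ∀ i j, i ≠ j → s i j * s i j = 1
  e_sq : ∀ i j, i ≠ j → ε i j * ε i j = ω • ε i j
  se : ∀ i j, i ≠ j → s i j * ε i j = ε i j
  es : ∀ i j, i ≠ j → ε i j * s i j = ε i j
  conj_s : ∀ i j k, i ≠ j → j ≠ k → i ≠ k → s i j * s j k * s i j = s i k
  conj_e : ∀ i j k, i ≠ j → j ≠ k → i ≠ k → s i j * ε j k * s i j = ε i k
  eee : ∀ i j k, i ≠ j → j ≠ k → i ≠ k → ε i j * ε j k * ε i j = ε i j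
  ese : ∀ i j k, i ≠ j → j ≠ k → i ≠ k → ε i j * s j k * ε i j = ε i j
  ee_es : ∀ i j k, i ≠ j → j ≠ k → i ≠ k → ε i j * ε j k = ε i j * s i k
  ee_es' : ∀ i j k, i ≠ j → j ≠ k → i ≠ k → ε j k * ε i j = ε j k * s i k
  ss_comm : ∀ i j k l, i ≠ k → i ≠ l → j ≠ k → j ≠ l →
    s i j * s k l = s k l * s i j
  se_comm : ∀ i j k l, i ≠ k → i ≠ l → j ≠ k → j ≠ l →
    s i j * ε k l = ε k l * s i j
  ee_comm : ∀ i j k l, i ≠ k → i ≠ l → j ≠ k → j ≠ l →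
    ε i j * ε k l = ε k l * ε i j

/-- The Jucys–Murphy element `x_r = (ω-1)/2 + Σ_{i<r} (s_{ir} - ε_{ir})` of the Brauer
algebra (with strands labelled `0, 1, 2, …`). -/
noncomputable def brauerJM {K : Type*} [Field K] {A : Type*} [Ring A] [Algebra K A]
    (ω : K) (s ε : ℕ → ℕ → A) (r : ℕ) : A :=
  ((ω - 1) / 2) • (1 : A) + ∑ i ∈ Finset.range r, (s i r - ε i r)


section Aux

variable {K : Type*} [Field K] {A : Type*} [Ring A] [Algebra K A]
    {ω : K} {s ε : ℕ → ℕ → A}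

lemma brauer_aux_comm (hB : BrauerRels K A ω s ε)
    {j k t : ℕ} (hj : j < t) (hk : k < t) (hjk : j ≠ k) (a : A)
    (ha : a = s j k ∨ a = ε j k) :
    a * ∑ i ∈ Finset.range t, (s i t - ε i t)
      = (∑ i ∈ Finset.range t, (s i t - ε i t)) * a := by
  have hjt : j ≠ t := hj.ne
  have hkt : k ≠ t := hk.ne
  rw [Finset.mul_sum, Finset.sum_mul, ← sub_eq_zero, ← Finset.sum_sub_distrib]
  set f : ℕ → A := fun i => a * (s i t - ε i t) - (s i t - ε i t) * a with hf
  have hsub : ({j, k} : Finset ℕ) ⊆ Finset.range t := by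
    intro x hx
    simp only [Finset.mem_insert, Finset.mem_singleton] at hx
    rcases hx with rfl | rfl <;> simpa using by omega
  have hvanish : ∀ i ∈ Finset.range t, i ∉ ({j, k} : Finset ℕ) → f i = 0 := by
    intro i _ hni
    simp only [Finset.mem_insert, Finset.mem_singleton, not_or] at hni
    obtain ⟨hij, hik⟩ := hni
    have h1 : a * s i t = s i t * a := by
      rcases ha with h | h <;> subst h
      · exact hB.ss_comm j k i t (Ne.symm hij) hjt (Ne.symm hik) hkt
      · exact (hB.se_comm i t j k hij hik (Ne.symm hjt) (Ne.symm hkt)).symm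
    have h2 : a * ε i t = ε i t * a := by
      rcases ha with h | h <;> subst h
      · exact hB.se_comm j k i t (Ne.symm hij) hjt (Ne.symm hik) hkt
      · exact hB.ee_comm j k i t (Ne.symm hij) hjt (Ne.symm hik) hkt
    simp [hf, mul_sub, sub_mul, h1, h2]
  rw [← Finset.sum_subset hsub hvanish, Finset.sum_pair hjk]
  rcases ha with h | h <;> subst h
  · -- a = s j k
    have A1 : s j k * s j t = s k t * s j k := by
      have h := hB.conj_s k j t hjk.symm hjt hkt
      have h2 := congrArg (· * s k j) h
      simp only [mul_assoc, hB.s_sq k j hjk.symm, mul_one] at h2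
      rw [hB.s_symm j k]
      exact h2
    have A2 : s j k * s k t = s j t * s j k := by
      have h := hB.conj_s j k t hjk hkt hjt
      have h2 := congrArg (· * s j k) h
      simp only [mul_assoc, hB.s_sq j k hjk, mul_one] at h2
      exact h2
    have A3 : s j k * ε j t = ε k t * s j k := by
      have h := hB.conj_e k j t hjk.symm hjt hkt
      have h2 := congrArg (· * s k j) h
      simp only [mul_assoc, hB.s_sq k j hjk.symm, mul_one] at h2
      rw [hB.s_symm j k]
      exact h2
    have A4 : s j k * ε k t = ε j t * s j k := by
      have h := hB.conj_e j k t hjk hkt hjt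
      have h2 := congrArg (· * s j k) h
      simp only [mul_assoc, hB.s_sq j k hjk, mul_one] at h2
      exact h2
    simp only [hf, mul_sub, sub_mul, A1, A2, A3, A4]
    abel
  · -- a = ε j k
    have B1 : ε j k * ε j t = ε j k * s k t := by
      have h := hB.ee_es k j t hjk.symm hjt hkt
      rw [hB.e_symm k j] at h
      exact h
    have B2 : ε j k * ε k t = ε j k * s j t := hB.ee_es j k t hjk hkt hjt
    have B3 : s j t * ε j k = ε k t * s j t := by
      have h := hB.conj_e t j k (Ne.symm hjt) hjk (Ne.symm hkt)
      have h2 := congrArg (· * s t j) h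
      simp only [mul_assoc, hB.s_sq t j (Ne.symm hjt), mul_one] at h2
      rw [hB.s_symm j t, hB.e_symm k t]
      exact h2
    have B4 : s k t * ε j k = ε j t * s k t := by
      have h := hB.conj_e t k j (Ne.symm hkt) hjk.symm (Ne.symm hjt)
      have h2 := congrArg (· * s t k) h
      simp only [mul_assoc, hB.s_sq t k (Ne.symm hkt), mul_one] at h2
      rw [hB.s_symm k t, hB.e_symm j k, hB.e_symm j t]
      exact h2
    have B5 : ε j t * ε j k = ε j t * s k t := by
      have h := hB.ee_es' k j t hjk.symm hjt hkt
      rw [hB.e_symm k j] at h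
      exact h
    have B6 : ε k t * ε j k = ε k t * s j t := hB.ee_es' j k t hjk hkt hjt
    simp only [hf, mul_sub, sub_mul, B1, B2, B3, B4, B5, B6]
    abel

end Aux

/-- The Jucys–Murphy elements `x_1, …, x_n` of the Brauer algebra `B_n(ω)` pairwise
commute. -/
theorem brauer_jucysMurphy_comm {K : Type*} [Field K] {A : Type*} [Ring A] [Algebra K A]
    (ω : K) (s ε : ℕ → ℕ → A) (hB : BrauerRels K A ω s ε) (r t : ℕ) :
    brauerJM ω s ε r * brauerJM ω s ε t = brauerJM ω s ε t * brauerJM ω s ε r := by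
  -- reduce to the case r < t
  wlog h : r ≤ t with H
  · exact (H ω s ε hB t r (le_of_not_ge h)).symm
  rcases eq_or_lt_of_le h with rfl | hrt
  · rfl
  unfold brauerJM
  set c : K := (ω - 1) / 2 with hc
  set X : ℕ → A := fun m => ∑ i ∈ Finset.range m, (s i m - ε i m) with hX
  have hcent : ∀ a : A, (c • (1 : A)) * a = a * (c • (1 : A)) := by
    intro a
    rw [smul_mul_assoc, one_mul, mul_smul_comm, mul_one]
  have hmain : X r * X t = X t * X r := by
    rw [hX]
    simp only [Finset.sum_mul (s := Finset.range r), Finset.mul_sum (s := Finset.range r)]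
    refine Finset.sum_congr rfl fun i hi => ?_
    have hir : i < r := Finset.mem_range.mp hi
    have h1 : s i r * X t = X t * s i r :=
      brauer_aux_comm hB (hir.trans hrt) hrt hir.ne (s i r) (Or.inl rfl)
    have h2 : ε i r * X t = X t * ε i r :=
      brauer_aux_comm hB (hir.trans hrt) hrt hir.ne (ε i r) (Or.inr rfl)
    rw [sub_mul, mul_sub, h1, h2]
  calc (c • (1:A) + X r) * (c • (1:A) + X t)
      = (c • (1:A)) * (c • (1:A)) + (c • (1:A)) * X t + X r * (c • (1:A)) + X r * X t := by
        rw [add_mul, mul_add, mul_add]; abel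
    _ = (c • (1:A)) * (c • (1:A)) + (c • (1:A)) * X r + X t * (c • (1:A)) + X t * X r := by
        rw [hmain, hcent (X t), ← hcent (X r)]; abel
    _ = (c • (1:A) + X t) * (c • (1:A) + X r) := by
        rw [add_mul, mul_add, mul_add]; abel
end

section
/- Let A_{n-1} be the anti-symmetrizer (1/(n-1)!) Σ_{σ ∈ S_{n-1}} sgn(σ) σ regarded as an element of the Brauer algebra B_n(ω). Then for any two distinct indices i, j ∈ {1,...,n-1}: A_{n-1} s_{in} s_{jn} = -A_{n-1} s_{in}, A_{n-1} s_{in} ε_{jn} = 0, A_{n-1} ε_{in} ε_{jn} = A_{n-1} ε_{in} s_{ij} = -A_{n-1} ε_{jn}, and A_{n-1} (ε_{in} s_{jn} + ε_{jn} s_{in}) = 0. -/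
open scoped BigOperators

/-- Products of the anti-symmetrizer `A_{n-1} = (1/(n-1)!) Σ_{σ ∈ S_{n-1}} sgn(σ) σ`
(regarded inside the Brauer algebra `B_n(ω)`) with the elements `s_{in}, ε_{in}, s_{ij}`.
Here the `n` strands are labelled `0, …, m` with `m = n - 1`, the group algebra of
`S_{n-1} = Perm (Fin m)` is embedded via `π`, and the last strand has label `m`. -/
theorem brauer_antisymmetrizer_relations {K : Type*} [Field K] [CharZero K] {A : Type*}
    [Ring A] [Algebra K A] (ω : K) (s ε : ℕ → ℕ → A) (hB : BrauerRels K A ω s ε)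
    (m : ℕ) (π : Equiv.Perm (Fin m) → A)
    (hπ_one : π 1 = 1)
    (hπ_mul : ∀ σ τ, π (σ * τ) = π σ * π τ)
    (hπ_swap : ∀ k l : Fin m, k ≠ l → π (Equiv.swap k l) = s (k : ℕ) (l : ℕ)) :
    let Aasym : A := ((Nat.factorial m : K))⁻¹ •
      ∑ σ : Equiv.Perm (Fin m), (((Equiv.Perm.sign σ : ℤ) : K)) • π σ
    ∀ i j : ℕ, i < m → j < m → i ≠ j →
      Aasym * s i m * s j m = -(Aasym * s i m) ∧
      Aasym * s i m * ε j m = 0 ∧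
      Aasym * ε i m * ε j m = -(Aasym * ε j m) ∧
      Aasym * ε i m * s i j = -(Aasym * ε j m) ∧
      Aasym * (ε i m * s j m + ε j m * s i m) = 0 := by
  intro Aasym i j hi hj hij
  have hAdef : Aasym = ((Nat.factorial m : K))⁻¹ •
      ∑ σ : Equiv.Perm (Fin m), (((Equiv.Perm.sign σ : ℤ) : K)) • π σ := rfl
  -- key lemma: Aasym * π σ = sign σ • Aasym
  have hA : ∀ σ : Equiv.Perm (Fin m),
      Aasym * π σ = (((Equiv.Perm.sign σ : ℤ) : K)) • Aasym := by
    intro σ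
    have hsq : (((Equiv.Perm.sign σ : ℤ) : K)) * (((Equiv.Perm.sign σ : ℤ) : K)) = 1 := by
      rcases Int.units_eq_one_or (Equiv.Perm.sign σ) with h | h <;> rw [h] <;> norm_num
    have step : (∑ τ : Equiv.Perm (Fin m), (((Equiv.Perm.sign τ : ℤ) : K)) • π τ) * π σ
        = (((Equiv.Perm.sign σ : ℤ) : K)) •
          ∑ τ : Equiv.Perm (Fin m), (((Equiv.Perm.sign τ : ℤ) : K)) • π τ := by
      rw [Finset.sum_mul, Finset.smul_sum]
      refine Fintype.sum_equiv (Equiv.mulRight σ) _ _ ?_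
      intro τ
      simp only [Equiv.coe_mulRight, hπ_mul, map_mul, smul_mul_assoc, smul_smul]
      congr 1
      push_cast
      ring_nf
      rw [sq, hsq, one_mul]
    rw [hAdef, smul_mul_assoc, step, smul_comm]
  -- m! is fine, now the basic consequences
  have hAs : ∀ k l : ℕ, k < m → l < m → k ≠ l → Aasym * s k l = -Aasym := by
    intro k l hk hl hkl
    have hne : (⟨k, hk⟩ : Fin m) ≠ ⟨l, hl⟩ := by
      simp [Fin.ext_iff, hkl]
    have := hA (Equiv.swap (⟨k, hk⟩ : Fin m) ⟨l, hl⟩)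
    rw [hπ_swap _ _ hne, Equiv.Perm.sign_swap hne] at this
    simpa using this
  have two_ne : (2 : K) ≠ 0 := two_ne_zero
  have self_neg : ∀ x : A, x = -x → x = 0 := by
    intro x h
    have h2 : (2 : K) • x = 0 := by
      rw [two_smul]
      nth_rewrite 1 [h]
      exact neg_add_cancel x
    calc x = (2 : K)⁻¹ • ((2 : K) • x) := by
          rw [smul_smul, inv_mul_cancel₀ two_ne, one_smul]
      _ = 0 := by rw [h2, smul_zero]
  have hAe : ∀ k l : ℕ, k < m → l < m → k ≠ l → Aasym * ε k l = 0 := by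
    intro k l hk hl hkl
    apply self_neg
    calc Aasym * ε k l = Aasym * (s k l * ε k l) := by rw [hB.se k l hkl]
      _ = (Aasym * s k l) * ε k l := by rw [mul_assoc]
      _ = -(Aasym * ε k l) := by rw [hAs k l hk hl hkl, neg_mul]
  -- inequalities
  have hiM : i ≠ m := Nat.ne_of_lt hi
  have hjM : j ≠ m := Nat.ne_of_lt hj
  have hMi : m ≠ i := fun h => hiM h.symm
  have hMj : m ≠ j := fun h => hjM h.symm
  have hji : j ≠ i := fun h => hij h.symm
  -- basic relations derived from conjugation
  -- s i m * s m j = s i j * s i m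
  have r1 : s i m * s m j = s i j * s i m := by
    have hc := hB.conj_s i m j hiM hMj hij
    calc s i m * s m j = (s i m * s m j * s i m) * s i m := by
          rw [mul_assoc, hB.s_sq i m hiM, mul_one]
      _ = s i j * s i m := by rw [hc]
  -- s i m * ε m j = ε i j * s i m
  have r2 : s i m * ε m j = ε i j * s i m := by
    have hc := hB.conj_e i m j hiM hMj hij
    calc s i m * ε m j = (s i m * ε m j * s i m) * s i m := by
          rw [mul_assoc, hB.s_sq i m hiM, mul_one]
      _ = ε i j * s i m := by rw [hc]
  -- ε i m * s j i = s j i * ε j m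
  have r3 : ε i m * s j i = s j i * ε j m := by
    have hc := hB.conj_e j i m hji hiM hjM
    calc ε i m * s j i = s j i * (s j i * ε i m * s j i) := by
          rw [← mul_assoc, ← mul_assoc, hB.s_sq j i hji, one_mul]
      _ = s j i * ε j m := by rw [hc]
  -- s m i * s i j = s m j * s m i
  have r4 : s m i * s i j = s m j * s m i := by
    have hc := hB.conj_s m i j hMi hij hMj
    calc s m i * s i j = (s m i * s i j * s m i) * s m i := by
          rw [mul_assoc, hB.s_sq m i hMi, mul_one]
      _ = s m j * s m i := by rw [hc]
  -- Part 1
  have p1 : Aasym * s i m * s j m = -(Aasym * s i m) := by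
    calc Aasym * s i m * s j m = Aasym * (s i m * s m j) := by
          rw [mul_assoc, hB.s_symm j m]
      _ = Aasym * s i j * s i m := by rw [r1, ← mul_assoc]
      _ = -(Aasym * s i m) := by rw [hAs i j hi hj hij, neg_mul]
  -- Part 2
  have p2 : Aasym * s i m * ε j m = 0 := by
    calc Aasym * s i m * ε j m = Aasym * (s i m * ε m j) := by
          rw [mul_assoc, hB.e_symm j m]
      _ = Aasym * ε i j * s i m := by rw [r2, ← mul_assoc]
      _ = 0 := by rw [hAe i j hi hj hij, zero_mul]
  -- Part 4 (needed for 3)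
  have p4 : Aasym * ε i m * s i j = -(Aasym * ε j m) := by
    calc Aasym * ε i m * s i j = Aasym * (ε i m * s j i) := by
          rw [mul_assoc, hB.s_symm i j]
      _ = Aasym * s j i * ε j m := by rw [r3, ← mul_assoc]
      _ = -(Aasym * ε j m) := by rw [hAs j i hj hi hji, neg_mul]
  -- Part 3
  have p3 : Aasym * ε i m * ε j m = -(Aasym * ε j m) := by
    have hc := hB.ee_es i m j hiM hMj hij
    calc Aasym * ε i m * ε j m = Aasym * (ε i m * ε m j) := by
          rw [mul_assoc, hB.e_symm j m]
      _ = Aasym * ε i m * s i j := by rw [hc, mul_assoc]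
      _ = -(Aasym * ε j m) := p4
  -- Part 5
  have p5 : Aasym * (ε i m * s j m + ε j m * s i m) = 0 := by
    -- ε j m * s i m * s i j = ε j m * s i m
    have r5 : ε j m * s i m * s i j = ε j m * s i m := by
      calc ε j m * s i m * s i j = ε j m * (s m i * s i j) := by
            rw [mul_assoc, hB.s_symm i m]
        _ = ε j m * s m j * s m i := by rw [r4, ← mul_assoc]
        _ = ε j m * s i m := by rw [hB.s_symm m j, hB.es j m hjM, hB.s_symm m i]
    -- s j m = s j i * s i m * s j i
    have r6 : s j m = s j i * s i m * s j i := by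
      rw [hB.conj_s j i m hji hiM hjM]
    have key : Aasym * (ε i m * s j m) = -(Aasym * (ε j m * s i m)) := by
      calc Aasym * (ε i m * s j m) = Aasym * (ε i m * (s j i * s i m * s j i)) := by
            rw [← r6]
        _ = Aasym * ((ε i m * s j i) * s i m * s j i) := by
            rw [mul_assoc (ε i m), mul_assoc (ε i m)]
        _ = Aasym * (s j i * ε j m * s i m * s j i) := by rw [r3]
        _ = Aasym * s j i * (ε j m * s i m * s j i) := by
            simp only [mul_assoc]
        _ = -(Aasym * (ε j m * s i m * s j i)) := by
            rw [hAs j i hj hi hji, neg_mul]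
        _ = -(Aasym * (ε j m * s i m)) := by rw [hB.s_symm j i, r5]
    rw [mul_add, key, neg_add_cancel]
  exact ⟨p1, p2, p3, p4, p5⟩
end

section
/- In the Brauer algebra B_n(ω), the anti-symmetrizers A_k (images of the full anti-symmetrizer of C[S_k] under the natural embedding) satisfy the recurrence A_{n-1} · (x_n - c_1 - 1)(x_n + c_1 - n + 2)/(2 c_1 - 2n + 3) = A_{n-1} (−1 + s_{1n} + ... + s_{n-1,n}), where x_n is the Jucys–Murphy element and c_1 = (ω-1)/2. -/
open scoped BigOperators

/-- In the Brauer algebra `B_n(ω)`, the anti-symmetrizer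
`A_{n-1} = (1/(n-1)!) Σ_{σ ∈ S_{n-1}} sgn(σ) σ` and the Jucys–Murphy element
`x_n = (ω-1)/2 + Σ_{i=1}^{n-1} (s_{in} - ε_{in})` satisfy
`A_{n-1} (x_n - c₁ - 1)(x_n + c₁ - n + 2)/(2c₁ - 2n + 3) = A_{n-1}(-1 + s_{1n} + ⋯ + s_{n-1,n})`
with `c₁ = (ω-1)/2`.  The `n` strands are labelled `0, …, m` with `m = n - 1`, and the
group algebra of `S_{n-1} = Perm (Fin m)` is embedded via `π`. -/
theorem brauer_antisymmetrizer_recurrence {K : Type*} [Field K] [CharZero K] {A : Type*}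
    [Ring A] [Algebra K A] (ω : K) (s ε : ℕ → ℕ → A) (hB : BrauerRels K A ω s ε)
    (m : ℕ) (π : Equiv.Perm (Fin m) → A)
    (hπ_one : π 1 = 1)
    (hπ_mul : ∀ σ τ, π (σ * τ) = π σ * π τ)
    (hπ_swap : ∀ k l : Fin m, k ≠ l → π (Equiv.swap k l) = s (k : ℕ) (l : ℕ))
    (hden : 2 * ((ω - 1) / 2) - 2 * ((m : K) + 1) + 3 ≠ 0) :
    let Aasym : A := ((Nat.factorial m : K))⁻¹ •
      ∑ σ : Equiv.Perm (Fin m), (((Equiv.Perm.sign σ : ℤ) : K)) • π σ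
    let c₁ : K := (ω - 1) / 2
    let x : A := c₁ • (1 : A) + ∑ i ∈ Finset.range m, (s i m - ε i m)
    (2 * c₁ - 2 * ((m : K) + 1) + 3)⁻¹ •
        (Aasym * ((x - (c₁ + 1) • (1 : A)) * (x + (c₁ - ((m : K) + 1) + 2) • (1 : A)))) =
      Aasym * (-1 + ∑ i ∈ Finset.range m, s i m) := by
  
  intro Aasym c₁ x
  have hAd : Aasym = ((Nat.factorial m : K))⁻¹ •
      ∑ σ : Equiv.Perm (Fin m), (((Equiv.Perm.sign σ : ℤ) : K)) • π σ := rfl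
  have hc₁ : c₁ = (ω - 1) / 2 := rfl
  set S := ∑ i ∈ Finset.range m, s i m with hSdef
  set E := ∑ i ∈ Finset.range m, ε i m with hEdef
  have hx : x = c₁ • (1 : A) + (S - E) := by
    show c₁ • (1 : A) + ∑ i ∈ Finset.range m, (s i m - ε i m) = _
    rw [Finset.sum_sub_distrib]
  -- the half lemma
  have half : ∀ a : A, a + a = 0 → a = 0 := by
    intro a h
    have h2 : (2 : K) • a = 0 := by rw [two_smul]; exact h
    calc a = (2 : K)⁻¹ • ((2 : K) • a) := by
            rw [smul_smul, inv_mul_cancel₀ (two_ne_zero), one_smul]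
      _ = 0 := by rw [h2, smul_zero]
  -- antisymmetrizer absorbs permutations
  have hA : ∀ σ : Equiv.Perm (Fin m),
      Aasym * π σ = (((Equiv.Perm.sign σ : ℤ) : K)) • Aasym := by
    intro σ
    rw [hAd]
    have h1 : (∑ τ : Equiv.Perm (Fin m), (((Equiv.Perm.sign τ : ℤ) : K)) • π τ) * π σ
        = (((Equiv.Perm.sign σ : ℤ) : K)) •
          ∑ τ : Equiv.Perm (Fin m), (((Equiv.Perm.sign τ : ℤ) : K)) • π τ := by
      rw [Finset.sum_mul, Finset.smul_sum]
      refine Fintype.sum_equiv (Equiv.mulRight σ) _ _ ?_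
      intro τ
      have hs : Equiv.Perm.sign (τ * σ) = Equiv.Perm.sign τ * Equiv.Perm.sign σ :=
        Equiv.Perm.sign_mul τ σ
      rw [Equiv.coe_mulRight, smul_mul_assoc, ← hπ_mul, smul_smul]
      rcases Int.units_eq_one_or (Equiv.Perm.sign σ) with h | h <;>
        rcases Int.units_eq_one_or (Equiv.Perm.sign τ) with h' | h' <;>
        simp [hs, h, h']
    rw [smul_mul_assoc, h1, smul_smul, smul_smul, mul_comm]
  have hne : ∀ i : ℕ, i < m → i ≠ m := fun i hi => Nat.ne_of_lt hi
  have hAs : ∀ i j : ℕ, i < m → j < m → i ≠ j → Aasym * s i j = -Aasym := by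
    intro i j hi hj hij
    have hfij : (⟨i, hi⟩ : Fin m) ≠ ⟨j, hj⟩ := by simp [Fin.ext_iff, hij]
    have h := hA (Equiv.swap (⟨i, hi⟩ : Fin m) ⟨j, hj⟩)
    rw [hπ_swap _ _ hfij, Equiv.Perm.sign_swap hfij] at h
    simpa using h
  have hAe : ∀ i j : ℕ, i < m → j < m → i ≠ j → Aasym * ε i j = 0 := by
    intro i j hi hj hij
    have h1 : Aasym * ε i j = -(Aasym * ε i j) := by
      conv_lhs => rw [← hB.se i j hij, ← mul_assoc, hAs i j hi hj hij, neg_mul]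
    refine half _ ?_
    nth_rewrite 2 [h1]
    simp
  -- Brauer product lemmas
  have P1 : ∀ i j : ℕ, i < m → j < m → i ≠ j → s i m * s j m = s i j * s i m := by
    intro i j hi hj hij
    have h := hB.conj_s i m j (hne i hi) (Ne.symm (hne j hj)) hij
    calc s i m * s j m = s i m * s m j * (s i m * s i m) := by
          rw [hB.s_sq i m (hne i hi), mul_one, hB.s_symm j m]
      _ = (s i m * s m j * s i m) * s i m := by rw [← mul_assoc]
      _ = s i j * s i m := by rw [h]
  have P2 : ∀ i j : ℕ, i < m → j < m → i ≠ j → s i m * ε j m = ε i j * s i m := by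
    intro i j hi hj hij
    have h := hB.conj_e i m j (hne i hi) (Ne.symm (hne j hj)) hij
    calc s i m * ε j m = s i m * ε m j * (s i m * s i m) := by
          rw [hB.s_sq i m (hne i hi), mul_one, hB.e_symm j m]
      _ = (s i m * ε m j * s i m) * s i m := by rw [← mul_assoc]
      _ = ε i j * s i m := by rw [h]
  have Pes : ∀ i j : ℕ, i < m → j < m → i ≠ j → ε i m * s i j = s i j * ε j m := by
    intro i j hi hj hij
    have h2 := hB.conj_e i j m hij (hne j hj) (hne i hi)
    calc ε i m * s i j = (s i j * ε j m * s i j) * s i j := by rw [h2]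
      _ = s i j * ε j m * (s i j * s i j) := by rw [mul_assoc]
      _ = s i j * ε j m := by rw [hB.s_sq i j hij, mul_one]
  have P3 : ∀ i j : ℕ, i < m → j < m → i ≠ j → ε i m * ε j m = s i j * ε j m := by
    intro i j hi hj hij
    have h1 := hB.ee_es i m j (hne i hi) (Ne.symm (hne j hj)) hij
    calc ε i m * ε j m = ε i m * ε m j := by rw [hB.e_symm j m]
      _ = ε i m * s i j := h1
      _ = s i j * ε j m := Pes i j hi hj hij
  have P4 : ∀ i j : ℕ, i < m → j < m → i ≠ j →
      ε i m * s j m = s i j * (ε j m * s i m) := by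
    intro i j hi hj hij
    calc ε i m * s j m = (ε i m * s i m) * s j m := by rw [hB.es i m (hne i hi)]
      _ = ε i m * (s i m * s j m) := by rw [mul_assoc]
      _ = ε i m * (s i j * s i m) := by rw [P1 i j hi hj hij]
      _ = (ε i m * s i j) * s i m := by rw [mul_assoc]
      _ = (s i j * ε j m) * s i m := by rw [Pes i j hi hj hij]
      _ = s i j * (ε j m * s i m) := by rw [mul_assoc]
  -- A-level lemmas
  have L1 : ∀ i j : ℕ, i < m → j < m → i ≠ j →
      Aasym * (s i m * s j m) = -(Aasym * s i m) := by
    intro i j hi hj hij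
    rw [P1 i j hi hj hij, ← mul_assoc, hAs i j hi hj hij, neg_mul]
  have L2 : ∀ i j : ℕ, i < m → j < m → i ≠ j →
      Aasym * (s i m * ε j m) = 0 := by
    intro i j hi hj hij
    rw [P2 i j hi hj hij, ← mul_assoc, hAe i j hi hj hij, zero_mul]
  have L3 : ∀ i j : ℕ, i < m → j < m → i ≠ j →
      Aasym * (ε i m * ε j m) = -(Aasym * ε j m) := by
    intro i j hi hj hij
    rw [P3 i j hi hj hij, ← mul_assoc, hAs i j hi hj hij, neg_mul]
  have L4 : ∀ i j : ℕ, i < m → j < m → i ≠ j →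
      Aasym * (ε i m * s j m) = -(Aasym * (ε j m * s i m)) := by
    intro i j hi hj hij
    rw [P4 i j hi hj hij, ← mul_assoc, hAs i j hi hj hij, neg_mul]
  -- sum computations
  have hSS : Aasym * (S * S) = m • Aasym + Aasym * S - m • (Aasym * S) := by
    rw [hSdef, Finset.sum_mul, Finset.mul_sum]
    have inner : ∀ i ∈ Finset.range m,
        Aasym * (s i m * ∑ j ∈ Finset.range m, s j m)
        = (Aasym + Aasym * s i m) - m • (Aasym * s i m) := by
      intro i hi'
      have hi := Finset.mem_range.mp hi'
      rw [Finset.mul_sum, Finset.mul_sum]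
      have step : ∀ j ∈ Finset.range m, Aasym * (s i m * s j m)
          = (if i = j then Aasym + Aasym * s i m else 0) - Aasym * s i m := by
        intro j hj'
        have hj := Finset.mem_range.mp hj'
        by_cases h : i = j
        · subst h
          rw [if_pos rfl, hB.s_sq i m (hne i hi), mul_one, add_sub_cancel_right]
        · rw [if_neg h, L1 i j hi hj h, zero_sub]
      rw [Finset.sum_congr rfl step, Finset.sum_sub_distrib, Finset.sum_ite_eq,
        if_pos hi', Finset.sum_const, Finset.card_range]
    rw [Finset.sum_congr rfl inner, Finset.sum_sub_distrib, Finset.sum_add_distrib,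
      Finset.sum_const, Finset.card_range, ← Finset.mul_sum, ← Finset.smul_sum,
      ← Finset.mul_sum]
  have hSE : Aasym * (S * E) = Aasym * E := by
    rw [hSdef, hEdef, Finset.sum_mul, Finset.mul_sum]
    have inner : ∀ i ∈ Finset.range m,
        Aasym * (s i m * ∑ j ∈ Finset.range m, ε j m) = Aasym * ε i m := by
      intro i hi'
      have hi := Finset.mem_range.mp hi'
      rw [Finset.mul_sum, Finset.mul_sum]
      have step : ∀ j ∈ Finset.range m, Aasym * (s i m * ε j m)
          = if i = j then Aasym * ε j m else 0 := by
        intro j hj'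
        have hj := Finset.mem_range.mp hj'
        by_cases h : i = j
        · subst h
          rw [if_pos rfl, hB.se i m (hne i hi)]
        · rw [if_neg h, L2 i j hi hj h]
      rw [Finset.sum_congr rfl step, Finset.sum_ite_eq, if_pos hi']
    rw [Finset.sum_congr rfl inner, ← Finset.mul_sum]
  have hEE : Aasym * (E * E) = ω • (Aasym * E) + Aasym * E - m • (Aasym * E) := by
    rw [hEdef, Finset.sum_mul, Finset.mul_sum]
    have inner : ∀ i ∈ Finset.range m,
        Aasym * (ε i m * ∑ j ∈ Finset.range m, ε j m)
        = (ω • (Aasym * ε i m) + Aasym * ε i m) - Aasym * E := by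
      intro i hi'
      have hi := Finset.mem_range.mp hi'
      rw [Finset.mul_sum, Finset.mul_sum]
      have step : ∀ j ∈ Finset.range m, Aasym * (ε i m * ε j m)
          = (if i = j then ω • (Aasym * ε j m) + Aasym * ε j m else 0) - Aasym * ε j m := by
        intro j hj'
        have hj := Finset.mem_range.mp hj'
        by_cases h : i = j
        · subst h
          rw [if_pos rfl, hB.e_sq i m (hne i hi), mul_smul_comm, add_sub_cancel_right]
        · rw [if_neg h, L3 i j hi hj h, zero_sub]
      rw [Finset.sum_congr rfl step, Finset.sum_sub_distrib, Finset.sum_ite_eq,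
        if_pos hi', ← Finset.mul_sum, ← hEdef]
    rw [Finset.sum_congr rfl inner, Finset.sum_sub_distrib, Finset.sum_add_distrib,
      ← Finset.mul_sum, ← Finset.smul_sum, ← Finset.mul_sum, ← hEdef,
      Finset.sum_const, Finset.card_range]
  have hTdef : Aasym * (E * S)
      = ∑ i ∈ Finset.range m, ∑ j ∈ Finset.range m, Aasym * (ε i m * s j m) := by
    rw [hEdef, hSdef, Finset.sum_mul, Finset.mul_sum]
    exact Finset.sum_congr rfl fun i _ => by rw [Finset.mul_sum, Finset.mul_sum]
  have hES : Aasym * (E * S) = Aasym * E := by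
    have hT : Aasym * (E * S) + Aasym * (E * S) = Aasym * E + Aasym * E := by
      rw [hTdef]
      nth_rewrite 2 [Finset.sum_comm]
      rw [← Finset.sum_add_distrib]
      have step : ∀ i ∈ Finset.range m,
          ((∑ j ∈ Finset.range m, Aasym * (ε i m * s j m)) +
            ∑ j ∈ Finset.range m, Aasym * (ε j m * s i m))
          = Aasym * ε i m + Aasym * ε i m := by
        intro i hi'
        have hi := Finset.mem_range.mp hi'
        rw [← Finset.sum_add_distrib]
        have step2 : ∀ j ∈ Finset.range m,
            Aasym * (ε i m * s j m) + Aasym * (ε j m * s i m)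
            = if i = j then Aasym * ε i m + Aasym * ε i m else 0 := by
          intro j hj'
          have hj := Finset.mem_range.mp hj'
          by_cases h : i = j
          · subst h
            rw [if_pos rfl, hB.es i m (hne i hi)]
          · rw [if_neg h, L4 i j hi hj h, neg_add_cancel]
        rw [Finset.sum_congr rfl step2, Finset.sum_ite_eq, if_pos hi']
      rw [Finset.sum_congr rfl step, Finset.sum_add_distrib, ← Finset.mul_sum,
        ← hEdef]
    have h0 : (Aasym * (E * S) - Aasym * E) + (Aasym * (E * S) - Aasym * E) = 0 := by
      rw [sub_add_sub_comm, hT, sub_self]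
    exact sub_eq_zero.mp (half _ h0)
  -- rewrite the two factors
  have hf1 : x - (c₁ + 1) • (1 : A) = (S - E) - 1 := by
    rw [hx, add_smul, one_smul]
    abel
  have hf2 : x + (c₁ - ((m : K) + 1) + 2) • (1 : A)
      = (S - E) + (2 * c₁ - (m : K) + 1) • (1 : A) := by
    rw [hx]
    have h : (2 * c₁ - (m : K) + 1) • (1 : A)
        = c₁ • (1 : A) + (c₁ - ((m : K) + 1) + 2) • (1 : A) := by
      rw [← add_smul]; congr 1; ring
    rw [h]
    abel
  have hprod : ((S - E) - 1) * ((S - E) + (2 * c₁ - (m : K) + 1) • (1 : A))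
      = S * S - S * E - E * S + E * E + (2 * c₁ - (m : K) + 1) • S
        - (2 * c₁ - (m : K) + 1) • E - S + E - (2 * c₁ - (m : K) + 1) • (1 : A) := by
    simp only [sub_mul, mul_sub, mul_add, add_mul, one_mul, mul_one, mul_smul_comm,
      smul_mul_assoc, smul_sub]
    abel
  have key : Aasym * (((S - E) - 1) * ((S - E) + (2 * c₁ - (m : K) + 1) • (1 : A)))
      = (2 * c₁ - 2 * ((m : K) + 1) + 3) • (-Aasym + Aasym * S) := by
    rw [hprod]
    simp only [mul_add, mul_sub, mul_smul_comm, mul_one]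
    rw [hSS, hSE, hES, hEE, hc₁]
    module
  rw [hf1, hf2, key, hc₁, smul_smul, inv_mul_cancel₀ hden, one_smul,
    mul_add, mul_neg, mul_one]
end

section
/- Let F(u) = u + F where F is the matrix of generators of g_N, let R(u) = 1 - P/u + Q/(u - κ) with κ = N/2 ∓ 1, and set U = Q (F_1 + κ) F_2 - F_2 (F_1 + κ) Q. Then R(u-v) F_1(u) F_2(v) - F_2(v) F_1(u) R(u-v) = U/(u - v - κ), as an identity of rational functions with values in End(C^N) ⊗ End(C^N) ⊗ U(g_N). -/
/-!
Write `x = F₁`, `y = F₂`. The permutation `P` intertwines them (`x P = P y`, `y P = P x`), and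
the skew-symmetry `F + F' = 0` lets `Q` turn `y` into `-x` from either side (`Q y = -Q x`,
`y Q = -x Q`). Expanding `R(u - v)`, the `P`-part of `R F₁(u) F₂(v) - F₂(v) F₁(u) R` is
`P x - P y`, which cancels the `P`-part of `[x, y] = x (P - Q) - (P - Q) x`; the `Q`-part is
`(Q x y - y x Q - (u - v)(Q x - x Q)) / (u - v - κ)`, and adding the remaining `Q x - x Q` of
`[x, y]` gives `U / (u - v - κ)`, for any scalar `κ`.
-/

open Matrix
open scoped Kronecker BigOperators

noncomputable section

/-- The permutation operator `P = Σ_{i,j} e_{ij} ⊗ e_{ji}` on `ℂ^N ⊗ ℂ^N`. -/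
def Pop (N : ℕ) : Matrix (Fin N × Fin N) (Fin N × Fin N) ℂ :=
  ∑ i : Fin N, ∑ j : Fin N,
    (Matrix.single i j (1 : ℂ)) ⊗ₖ (Matrix.single j i (1 : ℂ))

/-- The partial transpose `P^t = Σ_{i,j} e_{ij} ⊗ e_{ij}`. -/
def Ptop (N : ℕ) : Matrix (Fin N × Fin N) (Fin N × Fin N) ℂ :=
  ∑ i : Fin N, ∑ j : Fin N,
    (Matrix.single i j (1 : ℂ)) ⊗ₖ (Matrix.single i j (1 : ℂ))

/-- `Q = G₁ P^t G₁⁻¹`. -/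
def Qop (N : ℕ) (G : Matrix (Fin N) (Fin N) ℂ) : Matrix (Fin N × Fin N) (Fin N × Fin N) ℂ :=
  (G ⊗ₖ (1 : Matrix (Fin N) (Fin N) ℂ)) * Ptop N * (G⁻¹ ⊗ₖ (1 : Matrix (Fin N) (Fin N) ℂ))

variable {N : ℕ} {A : Type*}

/-- Embedding `M ↦ M ⊗ 1` of an `A`-valued matrix into the first tensor factor. -/
def emb1 [Ring A] (M : Matrix (Fin N) (Fin N) A) :
    Matrix (Fin N × Fin N) (Fin N × Fin N) A :=
  Matrix.of fun p q => if p.2 = q.2 then M p.1 q.1 else 0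

/-- Embedding `M ↦ 1 ⊗ M` of an `A`-valued matrix into the second tensor factor. -/
def emb2 [Ring A] (M : Matrix (Fin N) (Fin N) A) :
    Matrix (Fin N × Fin N) (Fin N × Fin N) A :=
  Matrix.of fun p q => if p.1 = q.1 then M p.2 q.2 else 0

section Relations

variable {R M : Type*} [CommRing R] [Ring M] [Algebra R M]

lemma smul_one_add_mul_smul_one_add_sub (x y : M) (u v : R) :
    (u • 1 + x) * (v • 1 + y) - (v • 1 + y) * (u • 1 + x) = x * y - y * x := by
  simp only [mul_add, add_mul, smul_mul_assoc, mul_smul_comm, one_mul, mul_one]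
  module

lemma one_sub_smul_add_smul_mul_mul_sub (p q a b : M) (s t : R) :
    (1 - s • p + t • q) * a * b - b * a * (1 - s • p + t • q)
      = (a * b - b * a) - s • (p * a * b - b * a * p) + t • (q * a * b - b * a * q) := by
  simp only [add_mul, sub_mul, mul_add, mul_sub, one_mul, mul_one, smul_mul_assoc, mul_smul_comm]
  module

lemma mul_mul_sub_mul_mul_of_swap {p x y : M} (hxp : x * p = p * y) (hyp : y * p = p * x)
    (u v : R) :
    p * (u • 1 + x) * (v • 1 + y) - (v • 1 + y) * (u • 1 + x) * p
      = (u - v) • (p * y - p * x) := by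
  have hyxp : y * x * p = p * x * y := by rw [mul_assoc, hxp, ← mul_assoc, hyp]
  simp only [mul_add, add_mul, smul_mul_assoc, mul_smul_comm, one_mul, mul_one, hyxp, hxp, hyp]
  module

lemma mul_mul_sub_mul_mul_of_absorb {q x y : M} (hqy : q * y = -(q * x))
    (hyq : y * q = -(x * q)) (u v : R) :
    q * (u • 1 + x) * (v • 1 + y) - (v • 1 + y) * (u • 1 + x) * q
      = q * x * y - y * x * q - (u - v) • (q * x - x * q) := by
  simp only [mul_add, add_mul, smul_mul_assoc, mul_smul_comm, one_mul, mul_one, hqy, hyq]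
  module

end Relations

theorem rff_identity_of_relations {K M : Type*} [Field K] [Ring M] [Algebra K M]
    {p q x y : M} (κ u v : K)
    (hxp : x * p = p * y) (hyp : y * p = p * x)
    (hqy : q * y = -(q * x)) (hyq : y * q = -(x * q))
    (hxy : x * y - y * x = x * (p - q) - (p - q) * x)
    (huv : u - v ≠ 0) (huvk : u - v - κ ≠ 0) :
    (1 - (u - v)⁻¹ • p + (u - v - κ)⁻¹ • q) * (u • 1 + x) * (v • 1 + y)
      - (v • 1 + y) * (u • 1 + x) * (1 - (u - v)⁻¹ • p + (u - v - κ)⁻¹ • q)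
    = (u - v - κ)⁻¹ • (q * (x + κ • 1) * y - y * (x + κ • 1) * q) := by
  have hxy' : x * y - y * x = (q * x - x * q) + (p * y - p * x) := by
    rw [hxy, mul_sub, sub_mul, hxp]; abel
  have hU : q * (x + κ • 1) * y - y * (x + κ • 1) * q
      = q * x * y - y * x * q - κ • (q * x - x * q) := by
    simp only [mul_add, add_mul, smul_mul_assoc, mul_smul_comm, mul_one, hqy, hyq]
    module
  rw [one_sub_smul_add_smul_mul_mul_sub, smul_one_add_mul_smul_one_add_sub,
    mul_mul_sub_mul_mul_of_swap hxp hyp, mul_mul_sub_mul_mul_of_absorb hqy hyq, hxy', hU,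
    smul_smul, inv_mul_cancel₀ huv, one_smul]
  match_scalars <;> field_simp <;> ring

lemma Pop_apply (i k j l : Fin N) :
    Pop N (i, k) (j, l) = if i = l ∧ k = j then 1 else 0 := by
  simp [Pop, Matrix.sum_apply, kroneckerMap_apply, Matrix.single, ite_and]
  aesop

lemma Ptop_apply (i k j l : Fin N) :
    Ptop N (i, k) (j, l) = if i = k ∧ j = l then 1 else 0 := by
  simp [Ptop, Matrix.sum_apply, kroneckerMap_apply, Matrix.single, ite_and]
  aesop

lemma Qop_apply (G : Matrix (Fin N) (Fin N) ℂ) (i k j l : Fin N) :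
    Qop N G (i, k) (j, l) = G i k * G⁻¹ l j := by
  simp [Qop, Matrix.mul_apply, Fintype.sum_prod_type, Ptop_apply, kroneckerMap_apply,
    Matrix.one_apply, ite_and]

section Embeddings

variable [Ring A] [Algebra ℂ A]

local notation "φ" => algebraMap ℂ A

lemma emb1_mul_Pop_map (F : Matrix (Fin N) (Fin N) A) :
    emb1 F * (Pop N).map φ = (Pop N).map φ * emb2 F := by
  ext ⟨i, k⟩ ⟨j, l⟩
  simp [Matrix.mul_apply, Pop_apply, emb1, emb2, Fintype.sum_prod_type, apply_ite φ, ite_and]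

lemma emb2_mul_Pop_map (F : Matrix (Fin N) (Fin N) A) :
    emb2 F * (Pop N).map φ = (Pop N).map φ * emb1 F := by
  ext ⟨i, k⟩ ⟨j, l⟩
  simp [Matrix.mul_apply, Pop_apply, emb1, emb2, Fintype.sum_prod_type, apply_ite φ, ite_and]

section Entries

variable (G : Matrix (Fin N) (Fin N) ℂ) (F : Matrix (Fin N) (Fin N) A) (i k j l : Fin N)

lemma Qop_map_mul_emb1_apply :
    ((Qop N G).map φ * emb1 F) (i, k) (j, l) = φ (G i k) * ((G⁻¹).map φ * F) l j := by
  simp [Matrix.mul_apply, Qop_apply, emb1, Fintype.sum_prod_type, Finset.mul_sum, mul_assoc]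

lemma Qop_map_mul_emb2_apply :
    ((Qop N G).map φ * emb2 F) (i, k) (j, l) = φ (G i k) * (Fᵀ * (G⁻¹).map φ) l j := by
  simp [Matrix.mul_apply, Qop_apply, emb2, Fintype.sum_prod_type, Finset.mul_sum,
    Algebra.commutes _ (F _ _), Algebra.left_comm]

lemma emb1_mul_Qop_map_apply :
    (emb1 F * (Qop N G).map φ) (i, k) (j, l) = (F * G.map φ) i k * φ (G⁻¹ l j) := by
  simp [Matrix.mul_apply, Qop_apply, emb1, Fintype.sum_prod_type, Finset.sum_mul, mul_assoc]

lemma emb2_mul_Qop_map_apply :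
    (emb2 F * (Qop N G).map φ) (i, k) (j, l) = (G.map φ * Fᵀ) i k * φ (G⁻¹ l j) := by
  simp [Matrix.mul_apply, Qop_apply, emb2, Fintype.sum_prod_type, Finset.sum_mul, mul_assoc,
    Algebra.left_comm]

end Entries

variable {G : Matrix (Fin N) (Fin N) ℂ} {F : Matrix (Fin N) (Fin N) A}

lemma transpose_mul_inv_map_eq_neg (hG : IsUnit G.det)
    (hskew : F + G.map φ * Fᵀ * (G⁻¹).map φ = 0) :
    Fᵀ * (G⁻¹).map φ = -((G⁻¹).map φ * F) := by
  have h := congrArg ((G⁻¹).map φ * ·) hskew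
  simp only [mul_add, mul_zero, ← Matrix.mul_assoc, ← Matrix.map_mul, Matrix.nonsing_inv_mul G hG,
    Matrix.map_one φ (map_zero φ) (map_one φ), Matrix.one_mul] at h
  exact eq_neg_of_add_eq_zero_right h

lemma map_mul_transpose_eq_neg (hG : IsUnit G.det)
    (hskew : F + G.map φ * Fᵀ * (G⁻¹).map φ = 0) :
    G.map φ * Fᵀ = -(F * G.map φ) := by
  have h := congrArg (· * G.map φ) hskew
  simp only [add_mul, zero_mul, Matrix.mul_assoc, ← Matrix.map_mul, Matrix.nonsing_inv_mul G hG,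
    Matrix.map_one φ (map_zero φ) (map_one φ), Matrix.mul_one] at h
  exact eq_neg_of_add_eq_zero_right h

lemma Qop_map_mul_emb2 (hG : IsUnit G.det) (hskew : F + G.map φ * Fᵀ * (G⁻¹).map φ = 0) :
    (Qop N G).map φ * emb2 F = -((Qop N G).map φ * emb1 F) := by
  ext ⟨i, k⟩ ⟨j, l⟩
  simp [Qop_map_mul_emb2_apply, Qop_map_mul_emb1_apply, transpose_mul_inv_map_eq_neg hG hskew]

lemma emb2_mul_Qop_map (hG : IsUnit G.det) (hskew : F + G.map φ * Fᵀ * (G⁻¹).map φ = 0) :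
    emb2 F * (Qop N G).map φ = -(emb1 F * (Qop N G).map φ) := by
  ext ⟨i, k⟩ ⟨j, l⟩
  simp [emb2_mul_Qop_map_apply, emb1_mul_Qop_map_apply, map_mul_transpose_eq_neg hG hskew]

end Embeddings

theorem RFF_identity_general [Ring A] [Algebra ℂ A]
    (G : Matrix (Fin N) (Fin N) ℂ) (hG : IsUnit G.det)
    (e : ℂ)
    (F : Matrix (Fin N) (Fin N) A)
    (hskew : F + G.map (algebraMap ℂ A) * Fᵀ * (G⁻¹).map (algebraMap ℂ A) = 0)
    (hcomm : emb1 F * emb2 F - emb2 F * emb1 F =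
      emb1 F * ((Pop N).map (algebraMap ℂ A) - (Qop N G).map (algebraMap ℂ A)) -
      ((Pop N).map (algebraMap ℂ A) - (Qop N G).map (algebraMap ℂ A)) * emb1 F)
    (u v : ℂ) (huv : u - v ≠ 0) (huvk : u - v - ((N : ℂ) / 2 - e) ≠ 0) :
    let κ : ℂ := (N : ℂ) / 2 - e
    let PA := (Pop N).map (algebraMap ℂ A)
    let QA := (Qop N G).map (algebraMap ℂ A)
    let R : Matrix (Fin N × Fin N) (Fin N × Fin N) A :=
      1 - (u - v)⁻¹ • PA + (u - v - κ)⁻¹ • QA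
    let U : Matrix (Fin N × Fin N) (Fin N × Fin N) A :=
      QA * (emb1 F + κ • 1) * emb2 F - emb2 F * (emb1 F + κ • 1) * QA
    R * (u • 1 + emb1 F) * (v • 1 + emb2 F) - (v • 1 + emb2 F) * (u • 1 + emb1 F) * R =
      (u - v - κ)⁻¹ • U :=
  rff_identity_of_relations _ u v (emb1_mul_Pop_map F) (emb2_mul_Pop_map F)
    (Qop_map_mul_emb2 hG hskew) (emb2_mul_Qop_map hG hskew) hcomm huv huvk

/-- Let `F(u) = u + F` where `F` is the matrix of generators of `𝔤_N`, let
`R(u) = 1 - P/u + Q/(u-κ)` with `κ = N/2 ∓ 1`, and set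
`U = Q(F₁ + κ)F₂ - F₂(F₁ + κ)Q`.  Then
`R(u-v) F₁(u) F₂(v) - F₂(v) F₁(u) R(u-v) = U/(u - v - κ)`. -/
theorem RFF_identity [Ring A] [Algebra ℂ A]
    (G : Matrix (Fin N) (Fin N) ℂ) (hG : IsUnit G.det)
    (e : ℂ) (he : (e = 1 ∧ Gᵀ = G) ∨ (e = -1 ∧ Gᵀ = -G))
    (F : Matrix (Fin N) (Fin N) A)
    (hskew : F + G.map (algebraMap ℂ A) * Fᵀ * (G⁻¹).map (algebraMap ℂ A) = 0)
    (hcomm : emb1 F * emb2 F - emb2 F * emb1 F =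
      emb1 F * ((Pop N).map (algebraMap ℂ A) - (Qop N G).map (algebraMap ℂ A)) -
      ((Pop N).map (algebraMap ℂ A) - (Qop N G).map (algebraMap ℂ A)) * emb1 F)
    (u v : ℂ) (huv : u - v ≠ 0) (huvk : u - v - ((N : ℂ) / 2 - e) ≠ 0) :
    let κ : ℂ := (N : ℂ) / 2 - e
    let PA := (Pop N).map (algebraMap ℂ A)
    let QA := (Qop N G).map (algebraMap ℂ A)
    let R : Matrix (Fin N × Fin N) (Fin N × Fin N) A :=
      1 - (u - v)⁻¹ • PA + (u - v - κ)⁻¹ • QA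
    let U : Matrix (Fin N × Fin N) (Fin N × Fin N) A :=
      QA * (emb1 F + κ • 1) * emb2 F - emb2 F * (emb1 F + κ • 1) * QA
    R * (u • 1 + emb1 F) * (v • 1 + emb2 F) - (v • 1 + emb2 F) * (u • 1 + emb1 F) * R =
      (u - v - κ)⁻¹ • U :=
  RFF_identity_general G hG e F hskew hcomm u v huv huvk

end
end

section
/- If T(u) is the generating matrix of the extended Yangian X(g_N) satisfying R(u-v) T_1(u) T_2(v) = T_2(v) T_1(u) R(u-v), then S(u) := T(-u)^{-1} T(u) satisfies the reflection equation R(u-v) S_1(u) R(u+v) S_2(v) = S_2(v) R(u+v) S_1(u) R(u-v) and S(u) S(-u) = 1; hence S(u) ↦ T(-u)^{-1} T(u) defines an algebra homomorphism B(g_N) → X(g_N). -/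
open Matrix
open scoped Kronecker BigOperators

noncomputable section

variable {N : ℕ} {A : Type*}

/-! Conjugation by `P`, which commutes with every `R(w)` because `P` commutes with `Q` for `G`
symmetric or skew-symmetric, swaps the two tensor factors of the RTT relation; and an exchange
relation `a b x = x b a` with `x` invertible yields `x⁻¹ a b = b a x⁻¹`. Applying these to the RTT
relation at `(u, v)`, `(u, -v)`, `(v, -u)` and `(-v, -u)` lets the factors of
`S₁(u) = T₁(-u)⁻¹ T₁(u)` and `S₂(v) = T₂(-v)⁻¹ T₂(v)` be moved past `R(u ± v)` one at a time,
which gives the reflection equation; `S(u) S(-u) = 1` is immediate. -/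

section Exchange

variable {M : Type*} [Monoid M]

theorem Units.inv_mul_mul_eq_of_mul_mul_eq (x : Mˣ) {a b : M}
    (h : a * b * x = x * b * a) : ↑x⁻¹ * a * b = b * a * ↑x⁻¹ :=
  calc ↑x⁻¹ * a * b = ↑x⁻¹ * (a * b * x) * ↑x⁻¹ := by simp [mul_assoc]
    _ = ↑x⁻¹ * (x * b * a) * ↑x⁻¹ := by rw [h]
    _ = b * a * ↑x⁻¹ := by simp [mul_assoc]

theorem mul_mul_eq_of_conj_involution {p r a a' b b' : M} (hp : p * p = 1) (hr : Commute p r)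
    (ha : p * a = a' * p) (hb : p * b = b' * p) (h : r * a * b = b * a * r) :
    r * a' * b' = b' * a' * r := by
  have hr' : ∀ z, p * (r * z) = r * (p * z) := fun z => by rw [← mul_assoc, hr.eq, mul_assoc]
  have ha' : ∀ z, p * (a * z) = a' * (p * z) := fun z => by rw [← mul_assoc, ha, mul_assoc]
  have hb' : ∀ z, p * (b * z) = b' * (p * z) := fun z => by rw [← mul_assoc, hb, mul_assoc]
  calc r * a' * b' = p * (r * a * b) * p := by simp only [mul_assoc, hr', ha', hb', hp, mul_one]
    _ = p * (b * a * r) * p := by rw [h]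
    _ = b' * a' * r := by simp only [mul_assoc, hr', ha', hb', hp, mul_one]

/-- With `x = T(u), T(v)`, `y = T(-u), T(-v)`, `rm = R(u - v)`, `rp = R(u + v)` the hypotheses
are instances of the RTT relation and the conclusion is the reflection equation. -/
theorem reflection_eq_of_exchange {rm rp x1 x2 : M} {y1 y2 : Mˣ} (hC : Commute rm rp)
    (hx : rm * x1 * x2 = x2 * x1 * rm) (h12 : rp * x1 * y2 = y2 * x1 * rp)
    (h21 : rp * x2 * y1 = y1 * x2 * rp) (hy : rm * y2 * y1 = y1 * y2 * rm) :
    rm * (↑y1⁻¹ * x1) * rp * (↑y2⁻¹ * x2) = ↑y2⁻¹ * x2 * rp * (↑y1⁻¹ * x1) * rm := by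
  have hB : x1 * rp * ↑y2⁻¹ = ↑y2⁻¹ * rp * x1 := (y2.inv_mul_mul_eq_of_mul_mul_eq h12).symm
  have hB' : ↑y1⁻¹ * rp * x2 = x2 * rp * ↑y1⁻¹ := y1.inv_mul_mul_eq_of_mul_mul_eq h21
  have hS : ↑y2⁻¹ * ↑y1⁻¹ * rm = rm * ↑y1⁻¹ * ↑y2⁻¹ :=
    y2.inv_mul_mul_eq_of_mul_mul_eq (y1.inv_mul_mul_eq_of_mul_mul_eq hy)
  calc rm * (↑y1⁻¹ * x1) * rp * (↑y2⁻¹ * x2)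
      = rm * ↑y1⁻¹ * (x1 * rp * ↑y2⁻¹) * x2 := by simp only [mul_assoc]
    _ = (rm * ↑y1⁻¹ * ↑y2⁻¹) * rp * (x1 * x2) := by rw [hB]; simp only [mul_assoc]
    _ = ↑y2⁻¹ * ↑y1⁻¹ * (rm * rp) * (x1 * x2) := by rw [← hS]; simp only [mul_assoc]
    _ = ↑y2⁻¹ * ↑y1⁻¹ * rp * (rm * x1 * x2) := by rw [hC.eq]; simp only [mul_assoc]
    _ = ↑y2⁻¹ * (↑y1⁻¹ * rp * x2) * x1 * rm := by rw [hx]; simp only [mul_assoc]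
    _ = ↑y2⁻¹ * x2 * rp * (↑y1⁻¹ * x1) * rm := by rw [hB']; simp only [mul_assoc]

end Exchange

theorem Matrix.inv_neg {n α : Type*} [Fintype n] [DecidableEq n] [CommRing α]
    (B : Matrix n n α) : (-B)⁻¹ = -B⁻¹ := by
  by_cases hB : IsUnit B.det
  · exact inv_eq_left_inv (by rw [neg_mul_neg, nonsing_inv_mul B hB])
  · have hnB : ¬IsUnit (-B).det := by
      rwa [det_neg, IsUnit.mul_iff, and_iff_right ((isUnit_one.neg).pow _)]
    rw [nonsing_inv_apply_not_isUnit B hB, nonsing_inv_apply_not_isUnit _ hnB, neg_zero]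

theorem Pop_apply_s15 (p q : Fin N × Fin N) :
    Pop N p q = if p.1 = q.2 ∧ p.2 = q.1 then 1 else 0 := by
  simp [Pop, Matrix.sum_apply, Matrix.single, ite_and]
  aesop

theorem Qop_apply_s15 (G : Matrix (Fin N) (Fin N) ℂ) (p q : Fin N × Fin N) :
    Qop N G p q = G p.1 p.2 * G⁻¹ q.2 q.1 := by
  simp [Qop, Ptop, Matrix.mul_apply, Matrix.sum_apply, Fintype.sum_prod_type, Matrix.single,
    Matrix.one_apply, ite_and]

theorem Pop_mul_self : Pop N * Pop N = 1 := by
  ext p q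
  simp [Matrix.mul_apply, Fintype.sum_prod_type, Pop_apply_s15, Matrix.one_apply, ite_and]
  aesop

theorem Qop_neg (G : Matrix (Fin N) (Fin N) ℂ) : Qop N (-G) = Qop N G := by
  ext p q
  simp [Qop_apply_s15, Matrix.inv_neg]

theorem Pop_mul_Qop (G : Matrix (Fin N) (Fin N) ℂ) : Pop N * Qop N G = Qop N Gᵀ * Pop N := by
  ext p q
  simp [Matrix.mul_apply, Fintype.sum_prod_type, Pop_apply_s15, Qop_apply_s15, ite_and,
    ← transpose_nonsing_inv]

theorem commute_Pop_Qop {G : Matrix (Fin N) (Fin N) ℂ} (hG : Gᵀ = G ∨ Gᵀ = -G) :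
    Commute (Pop N) (Qop N G) := by
  rcases hG with h | h
  · rw [Commute, SemiconjBy, Pop_mul_Qop, h]
  · rw [Commute, SemiconjBy, Pop_mul_Qop, h, Qop_neg]

section Embedding

variable [Ring A]

def emb1Hom : Matrix (Fin N) (Fin N) A →* Matrix (Fin N × Fin N) (Fin N × Fin N) A where
  toFun := emb1
  map_one' := by
    ext p q
    simp [emb1, Matrix.one_apply, Prod.ext_iff, ← ite_and, and_comm]
  map_mul' M M' := by
    ext p q
    simp [emb1, Matrix.mul_apply, Fintype.sum_prod_type]

def emb2Hom : Matrix (Fin N) (Fin N) A →* Matrix (Fin N × Fin N) (Fin N × Fin N) A where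
  toFun := emb2
  map_one' := by
    ext p q
    simp [emb2, Matrix.one_apply, Prod.ext_iff, ← ite_and]
  map_mul' M M' := by
    ext p q
    simp [emb2, Matrix.mul_apply, Fintype.sum_prod_type]

@[simp]
theorem emb1Hom_apply (M : Matrix (Fin N) (Fin N) A) : emb1Hom M = emb1 M := rfl

@[simp]
theorem emb2Hom_apply (M : Matrix (Fin N) (Fin N) A) : emb2Hom M = emb2 M := rfl

variable [Algebra ℂ A]

theorem Pop_map_mul_emb1 (M : Matrix (Fin N) (Fin N) A) :
    (Pop N).map (algebraMap ℂ A) * emb1 M = emb2 M * (Pop N).map (algebraMap ℂ A) := by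
  ext p q
  simp [Matrix.mul_apply, Fintype.sum_prod_type, Pop_apply_s15, emb1, emb2, ite_and,
    apply_ite (algebraMap ℂ A)]

theorem Pop_map_mul_emb2 (M : Matrix (Fin N) (Fin N) A) :
    (Pop N).map (algebraMap ℂ A) * emb2 M = emb1 M * (Pop N).map (algebraMap ℂ A) := by
  ext p q
  simp [Matrix.mul_apply, Fintype.sum_prod_type, Pop_apply_s15, emb1, emb2, ite_and,
    apply_ite (algebraMap ℂ A)]

theorem Pop_map_mul_self :
    (Pop N).map (algebraMap ℂ A) * (Pop N).map (algebraMap ℂ A) = 1 := by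
  rw [← Matrix.map_mul, Pop_mul_self, Matrix.map_one _ (map_zero _) (map_one _)]

end Embedding

section RMatrix

variable [Ring A] [Algebra ℂ A]

def rMatrix (G : Matrix (Fin N) (Fin N) ℂ) (κ w : ℂ) : Matrix (Fin N × Fin N) (Fin N × Fin N) A :=
  1 - w⁻¹ • (Pop N).map (algebraMap ℂ A) + (w - κ)⁻¹ • (Qop N G).map (algebraMap ℂ A)

variable {G : Matrix (Fin N) (Fin N) ℂ} (hG : Gᵀ = G ∨ Gᵀ = -G) (κ : ℂ)
include hG

theorem commute_Pop_map_rMatrix (w : ℂ) :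
    Commute ((Pop N).map (algebraMap ℂ A)) (rMatrix G κ w) := by
  have hPQ := (commute_Pop_Qop hG).map (algebraMap ℂ A).mapMatrix
  exact ((Commute.one_right _).sub_right ((Commute.refl _).smul_right _)).add_right
    (hPQ.smul_right _)

theorem commute_rMatrix (w w' : ℂ) :
    Commute (rMatrix (A := A) G κ w) (rMatrix G κ w') := by
  have hQ := ((commute_Pop_Qop hG).map (algebraMap ℂ A).mapMatrix).symm
  have hQR : Commute ((Qop N G).map (algebraMap ℂ A)) (rMatrix G κ w') :=
    ((Commute.one_right _).sub_right (hQ.smul_right _)).add_right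
      ((Commute.refl _).smul_right _)
  exact ((Commute.one_left _).sub_left
    ((commute_Pop_map_rMatrix hG κ w').smul_left _)).add_left (hQR.smul_left _)

theorem rMatrix_exchange_swap {w : ℂ} {M M' : Matrix (Fin N) (Fin N) A}
    (h : rMatrix G κ w * emb1 M * emb2 M' = emb2 M' * emb1 M * rMatrix G κ w) :
    rMatrix G κ w * emb2 M * emb1 M' = emb1 M' * emb2 M * rMatrix G κ w :=
  mul_mul_eq_of_conj_involution Pop_map_mul_self (commute_Pop_map_rMatrix hG κ w)
    (Pop_map_mul_emb1 M) (Pop_map_mul_emb2 M') h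

theorem reflection_equation_of_RTT (T : ℂ → (Matrix (Fin N) (Fin N) A)ˣ)
    (hRTT : ∀ u v : ℂ, u - v ≠ 0 → u - v - κ ≠ 0 →
      rMatrix G κ (u - v) * emb1 (T u).val * emb2 (T v).val =
        emb2 (T v).val * emb1 (T u).val * rMatrix G κ (u - v))
    {u v : ℂ} (h1 : u - v ≠ 0) (h2 : u + v ≠ 0) (h3 : u - v - κ ≠ 0) (h4 : u + v - κ ≠ 0) :
    rMatrix G κ (u - v) * emb1 ((T (-u))⁻¹ * T u).val * rMatrix G κ (u + v) *
        emb2 ((T (-v))⁻¹ * T v).val =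
      emb2 ((T (-v))⁻¹ * T v).val * rMatrix G κ (u + v) * emb1 ((T (-u))⁻¹ * T u).val *
        rMatrix G κ (u - v) := by
  have rtt : ∀ a b w, a - b = w → w ≠ 0 → w - κ ≠ 0 →
      rMatrix G κ w * emb1 (T a).val * emb2 (T b).val =
        emb2 (T b).val * emb1 (T a).val * rMatrix G κ w := by
    rintro a b w rfl
    exact hRTT a b
  have h12 := rtt u (-v) (u + v) (sub_neg_eq_add u v) h2 h4
  have h21 := rMatrix_exchange_swap hG κ (rtt v (-u) (u + v) (by ring) h2 h4)
  have hy := rMatrix_exchange_swap hG κ (rtt (-v) (-u) (u - v) (by ring) h1 h3)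
  have key := reflection_eq_of_exchange (y1 := (T (-u)).map emb1Hom) (y2 := (T (-v)).map emb2Hom)
    (commute_rMatrix hG κ (u - v) (u + v)) (hRTT u v h1 h3) h12 h21 hy
  simpa only [Units.coe_map_inv, Units.val_mul, ← emb1Hom_apply, ← emb2Hom_apply, map_mul]
    using key

end RMatrix

theorem reflection_from_RTT_general [Ring A] [Algebra ℂ A]
    (G : Matrix (Fin N) (Fin N) ℂ)
    (e : ℂ) (he : (e = 1 ∧ Gᵀ = G) ∨ (e = -1 ∧ Gᵀ = -G))
    (T Tinv : ℂ → Matrix (Fin N) (Fin N) A)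
    (hTinv : ∀ w, T w * Tinv w = 1 ∧ Tinv w * T w = 1)
    (hRTT : ∀ u v : ℂ, u - v ≠ 0 → u - v - ((N : ℂ) / 2 - e) ≠ 0 →
      (1 - (u - v)⁻¹ • (Pop N).map (algebraMap ℂ A)
          + (u - v - ((N : ℂ) / 2 - e))⁻¹ • (Qop N G).map (algebraMap ℂ A)) *
        emb1 (T u) * emb2 (T v) =
      emb2 (T v) * emb1 (T u) *
        (1 - (u - v)⁻¹ • (Pop N).map (algebraMap ℂ A)
          + (u - v - ((N : ℂ) / 2 - e))⁻¹ • (Qop N G).map (algebraMap ℂ A))) :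
    let κ : ℂ := (N : ℂ) / 2 - e
    let R : ℂ → Matrix (Fin N × Fin N) (Fin N × Fin N) A := fun w =>
      1 - w⁻¹ • (Pop N).map (algebraMap ℂ A) + (w - κ)⁻¹ • (Qop N G).map (algebraMap ℂ A)
    let S : ℂ → Matrix (Fin N) (Fin N) A := fun w => Tinv (-w) * T w
    (∀ u v : ℂ, u - v ≠ 0 → u + v ≠ 0 → u - v - κ ≠ 0 → u + v - κ ≠ 0 →
      R (u - v) * emb1 (S u) * R (u + v) * emb2 (S v) =
        emb2 (S v) * R (u + v) * emb1 (S u) * R (u - v)) ∧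
    (∀ u : ℂ, S u * S (-u) = 1) := by
  intro κ R S
  let U : ℂ → (Matrix (Fin N) (Fin N) A)ˣ := fun w => ⟨T w, Tinv w, (hTinv w).1, (hTinv w).2⟩
  have hG : Gᵀ = G ∨ Gᵀ = -G := he.imp And.right And.right
  refine ⟨fun u v h1 h2 h3 h4 => reflection_equation_of_RTT hG κ U hRTT h1 h2 h3 h4, fun u => ?_⟩
  change ((U (-u))⁻¹ * U u * ((U (- -u))⁻¹ * U (-u))).val = 1
  simp [mul_assoc]

/-- If `T(u)` is the generating matrix of the extended Yangian `X(𝔤_N)`, i.e. it is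
invertible and satisfies the RTT relation
`R(u-v) T₁(u) T₂(v) = T₂(v) T₁(u) R(u-v)` with `R(u) = 1 - P/u + Q/(u-κ)`, then
`S(u) := T(-u)⁻¹ T(u)` satisfies the reflection equation
`R(u-v) S₁(u) R(u+v) S₂(v) = S₂(v) R(u+v) S₁(u) R(u-v)` and the unitarity condition
`S(u) S(-u) = 1`; hence `S(u) ↦ T(-u)⁻¹ T(u)` defines an algebra homomorphism
`B(𝔤_N) → X(𝔤_N)`. -/
theorem reflection_from_RTT [Ring A] [Algebra ℂ A]
    (G : Matrix (Fin N) (Fin N) ℂ) (hG : IsUnit G.det)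
    (e : ℂ) (he : (e = 1 ∧ Gᵀ = G) ∨ (e = -1 ∧ Gᵀ = -G))
    (T Tinv : ℂ → Matrix (Fin N) (Fin N) A)
    (hTinv : ∀ w, T w * Tinv w = 1 ∧ Tinv w * T w = 1)
    (hRTT : ∀ u v : ℂ, u - v ≠ 0 → u - v - ((N : ℂ) / 2 - e) ≠ 0 →
      (1 - (u - v)⁻¹ • (Pop N).map (algebraMap ℂ A)
          + (u - v - ((N : ℂ) / 2 - e))⁻¹ • (Qop N G).map (algebraMap ℂ A)) *
        emb1 (T u) * emb2 (T v) =
      emb2 (T v) * emb1 (T u) *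
        (1 - (u - v)⁻¹ • (Pop N).map (algebraMap ℂ A)
          + (u - v - ((N : ℂ) / 2 - e))⁻¹ • (Qop N G).map (algebraMap ℂ A))) :
    let κ : ℂ := (N : ℂ) / 2 - e
    let R : ℂ → Matrix (Fin N × Fin N) (Fin N × Fin N) A := fun w =>
      1 - w⁻¹ • (Pop N).map (algebraMap ℂ A) + (w - κ)⁻¹ • (Qop N G).map (algebraMap ℂ A)
    let S : ℂ → Matrix (Fin N) (Fin N) A := fun w => Tinv (-w) * T w
    (∀ u v : ℂ, u - v ≠ 0 → u + v ≠ 0 → u - v - κ ≠ 0 → u + v - κ ≠ 0 →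
      R (u - v) * emb1 (S u) * R (u + v) * emb2 (S v) =
        emb2 (S v) * R (u + v) * emb1 (S u) * R (u - v)) ∧
    (∀ u : ℂ, S u * S (-u) = 1) :=
  reflection_from_RTT_general G e he T Tinv hTinv hRTT
end
end
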